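/- Let n ≥ 1, r ∈ (0,1), and let λ_1, …, λ_n ∈ ℂ with |λ_i| ≤ r for all i. Let M be the n×n lower-triangular matrix with entries M_{ij} = 0 for i < j, M_{ii} = λ_i, and M_{ij} = (1−|λ_i|²)^{1/2}·(1−|λ_j|²)^{1/2}·∏_{μ=j+1}^{i−1}(−conj(λ_μ)) for i > j (the empty product being 1). Then for every ζ ∈ ℂ with |ζ| ≥ 1, the matrix ζI − M is invertible and its inverse satisfies the entrywise bound |((ζI − M)^{-1})_{ij}| ≤ (1/(1−r))·(X_{1+r})_{ij} for all 1 ≤ i, j ≤ n; consequently ‖(ζI − M)^{-1}‖ ≤ (1/(1−r))·‖X_{1+r}‖. -/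

import Mathlib

/-- The operator norm of a complex `n × n` matrix induced by the Euclidean norm on `ℂⁿ`. -/
noncomputable def matNorm {n : ℕ} (T : Matrix (Fin n) (Fin n) ℂ) : ℝ :=
  ‖Matrix.toEuclideanCLM (𝕜 := ℂ) T‖

/-- The `n × n` lower-triangular Toeplitz matrix `X_β`. -/
noncomputable def Xmat (n : ℕ) (β : ℝ) : Matrix (Fin n) (Fin n) ℂ :=
  Matrix.of fun i j => if (i : ℕ) < (j : ℕ) then 0 else if (i : ℕ) = (j : ℕ) then 1 else (β : ℂ)

/-!
The inverse of `ζ • 1 - M` is explicit: it is again lower triangular, with diagonal entries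
`1 / (ζ - λᵢ)` and, below the diagonal, entries `sᵢ sⱼ / ((ζ - λᵢ)(ζ - λⱼ)) ∏_{j<μ<i} bμ(ζ)`, where
`sᵢ = √(1 - |λᵢ|²)` and `bμ(ζ) = (1 - conj λμ ζ) / (ζ - λμ)`. Since `ζ - λμ` times
`bμ(ζ) + conj λμ` equals `sμ²`, checking that this is a right inverse reduces to the
telescoping expansion of `∏ bμ - ∏ (-conj λμ)`. For `|ζ| ≥ 1` every Blaschke factor `bμ(ζ)` has
modulus at most `1`, and `sᵢ / |ζ - λᵢ| ≤ √((1 + r) / (1 - r))`, which gives the entrywise bound;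
a matrix dominated entrywise by a nonnegative matrix has at most its operator norm.
-/

open Finset Matrix OrderDual ComplexConjugate

theorem Finset.prod_Ioo_sub_prod_Ioo {ι R : Type*} [LinearOrder ι] [LocallyFiniteOrder ι]
    [CommRing R] (c a : ι → R) (j i : ι) :
    ∏ μ ∈ Ioo j i, c μ - ∏ μ ∈ Ioo j i, a μ =
      ∑ k ∈ Ioo j i, (c k - a k) * (∏ μ ∈ Ioo j k, c μ) * ∏ μ ∈ Ioo k i, a μ := by
  have h := prod_add_ordered (Ioo j i) a (c - a)
  simp only [Pi.sub_apply, add_sub_cancel] at h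
  rw [h, add_sub_cancel_left]
  refine sum_congr rfl fun k hk => ?_
  have hlt : {μ ∈ Ioo j i | μ < k} = Ioo j k := by ext; grind
  have hgt : {μ ∈ Ioo j i | k < μ} = Ioo k i := by ext; grind
  rw [hlt, hgt]

theorem Matrix.IsLowerTriangular.mul_apply {ι R : Type*} [Fintype ι] [LinearOrder ι]
    [LocallyFiniteOrder ι] [NonUnitalNonAssocSemiring R] {A B : Matrix ι ι R}
    (hA : A.IsLowerTriangular) (hB : B.IsLowerTriangular) (i j : ι) :
    (A * B) i j = ∑ k ∈ Icc j i, A i k * B k j := by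
  rw [Matrix.mul_apply]
  refine (sum_subset (subset_univ _) fun k _ hk => ?_).symm
  rcases lt_or_ge k j with hkj | hjk
  · rw [hB (show toDual j < toDual k from hkj), mul_zero]
  · rw [hA (show toDual k < toDual i from lt_of_not_ge fun h => hk (mem_Icc.2 ⟨hjk, h⟩)),
      zero_mul]

theorem Complex.norm_one_sub_conj_mul_le_norm_sub {w z : ℂ} (hw : ‖w‖ ≤ 1) (hz : 1 ≤ ‖z‖) :
    ‖1 - conj w * z‖ ≤ ‖z - w‖ := by
  have hw' : normSq w ≤ 1 := by rw [← Complex.sq_norm]; nlinarith [norm_nonneg w]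
  have hz' : 1 ≤ normSq z := by rw [← Complex.sq_norm]; nlinarith
  -- `‖z - w‖ ^ 2 - ‖1 - conj w * z‖ ^ 2 = (‖z‖ ^ 2 - 1) * (1 - ‖w‖ ^ 2)`
  have key : 0 ≤ (normSq z - 1) * (1 - normSq w) := mul_nonneg (by linarith) (by linarith)
  rw [← sq_le_sq₀ (norm_nonneg _) (norm_nonneg _), Complex.sq_norm, Complex.sq_norm]
  simp only [normSq_apply, sub_re, sub_im, one_re, one_im, mul_re, mul_im, conj_re,
    conj_im] at key ⊢
  nlinarith [key]

theorem Real.sqrt_one_sub_sq_div_le {a r x : ℝ} (ha : 0 ≤ a) (har : a ≤ r) (hr : r < 1)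
    (hx : 1 - a ≤ x) : √(1 - a ^ 2) / x ≤ √((1 + r) / (1 - r)) := by
  have hx0 : 0 < x := by linarith
  have hr' : 0 < 1 - r := by linarith
  rw [div_le_iff₀ hx0, ← Real.sqrt_sq hx0.le, ← Real.sqrt_mul (div_nonneg (by linarith) hr'.le)]
  refine Real.sqrt_le_sqrt ?_
  rw [div_mul_eq_mul_div, le_div_iff₀ hr']
  nlinarith [mul_le_mul hx hx (by linarith) hx0.le]

theorem Matrix.norm_toEuclideanCLM_le_of_norm_apply_le {ι 𝕜 : Type*} [RCLike 𝕜] [Fintype ι]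
    [DecidableEq ι] {T : Matrix ι ι 𝕜} {S : Matrix ι ι ℝ} (h : ∀ i j, ‖T i j‖ ≤ S i j) :
    ‖toEuclideanCLM (𝕜 := 𝕜) T‖ ≤ ‖toEuclideanCLM (𝕜 := 𝕜) (S.map (↑))‖ := by
  refine ContinuousLinearMap.opNorm_le_bound _ (norm_nonneg _) fun x => ?_
  set y : EuclideanSpace 𝕜 ι := WithLp.toLp 2 fun j => (‖x j‖ : 𝕜)
  have hy : ‖y‖ = ‖x‖ := by simp [y, EuclideanSpace.norm_eq]
  have hentry : ∀ i, ‖(toEuclideanCLM (𝕜 := 𝕜) T x) i‖ ≤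
      ‖(toEuclideanCLM (𝕜 := 𝕜) (S.map (↑)) y) i‖ := by
    intro i
    have hS : ∀ j, 0 ≤ S i j := fun j => (norm_nonneg _).trans (h i j)
    have happly : ∀ (A : Matrix ι ι 𝕜) (z : EuclideanSpace 𝕜 ι),
        (toEuclideanCLM (𝕜 := 𝕜) A z) i = ∑ j, A i j * z j := fun A z => by
      rw [ofLp_toEuclideanCLM]; rfl
    rw [happly, happly]
    calc ‖∑ j, T i j * x j‖ ≤ ∑ j, S i j * ‖x j‖ :=
          (norm_sum_le _ _).trans (sum_le_sum fun j _ => by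
            rw [norm_mul]; exact mul_le_mul_of_nonneg_right (h i j) (norm_nonneg _))
      _ = ‖∑ j, S.map (↑) i j * y j‖ := by
        simp only [map_apply, y, ← RCLike.ofReal_mul, ← RCLike.ofReal_sum, RCLike.norm_ofReal]
        exact (abs_of_nonneg (sum_nonneg fun j _ => mul_nonneg (hS j) (norm_nonneg _))).symm
  calc ‖toEuclideanCLM (𝕜 := 𝕜) T x‖ ≤ ‖toEuclideanCLM (𝕜 := 𝕜) (S.map (↑)) y‖ := by
        simp only [EuclideanSpace.norm_eq]
        gcongr with i
        exact hentry i
    _ ≤ _ := by rw [← hy]; exact ContinuousLinearMap.le_opNorm _ _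

section LowerSemiseparable

variable {ι K : Type*} [LinearOrder ι] [LocallyFiniteOrder ι]

def lowerSemiseparable [CommMonoidWithZero K] (d u v a : ι → K) : Matrix ι ι K :=
  of fun i j => if i < j then 0 else if i = j then d i else u i * v j * ∏ μ ∈ Ioo j i, a μ

theorem lowerSemiseparable_isLowerTriangular [CommMonoidWithZero K] (d u v a : ι → K) :
    (lowerSemiseparable d u v a).IsLowerTriangular := fun _ _ h => if_pos h

theorem smul_one_sub_lowerSemiseparable [CommRing K] (z : K) (d u v a : ι → K) :
    z • (1 : Matrix ι ι K) - lowerSemiseparable d u v a =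
      lowerSemiseparable (fun k => z - d k) (-u) v a := by
  ext i j
  rcases lt_trichotomy i j with h | rfl | h
  · simp [lowerSemiseparable, h, h.ne]
  · simp [lowerSemiseparable]
  · simp [lowerSemiseparable, h.ne', h.not_gt]

theorem lowerSemiseparable_mul_lowerSemiseparable_eq_one [Fintype ι] [Field K]
    {d u v a c : ι → K}
    (hd : ∀ k, d k ≠ 0) (hc : ∀ k, d k * (c k - a k) = -(u k * v k)) :
    lowerSemiseparable d u v a * lowerSemiseparable d⁻¹ (-u / d) (v / d) c = 1 := by
  ext i j
  rw [(lowerSemiseparable_isLowerTriangular _ _ _ _).mul_apply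
    (lowerSemiseparable_isLowerTriangular _ _ _ _), Matrix.one_apply]
  rcases lt_trichotomy i j with h | rfl | h
  · simp [Icc_eq_empty_of_lt h, h.ne]
  · simp [lowerSemiseparable, hd]
  · have hc' : ∀ k, c k - a k = -(u k * v k) / d k := fun k => by
      rw [← hc k, mul_div_cancel_left₀ _ (hd k)]
    have hsum : ∑ k ∈ Ioo j i,
          lowerSemiseparable d u v a i k * lowerSemiseparable d⁻¹ (-u / d) (v / d) c k j =
        u i * v j / d j * (∏ μ ∈ Ioo j i, c μ - ∏ μ ∈ Ioo j i, a μ) := by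
      rw [prod_Ioo_sub_prod_Ioo, mul_sum]
      refine sum_congr rfl fun k hk => ?_
      obtain ⟨hjk, hki⟩ := mem_Ioo.1 hk
      simp only [lowerSemiseparable, of_apply, if_neg hki.not_gt, if_neg hki.ne',
        if_neg hjk.not_gt, if_neg hjk.ne', Pi.div_apply, Pi.neg_apply, hc']
      ring
    rw [← Ico_insert_right h.le, sum_insert right_notMem_Ico, ← Ioo_insert_left h,
      sum_insert left_notMem_Ioo, hsum]
    simp only [lowerSemiseparable, of_apply, if_neg h.not_gt, if_neg h.ne', lt_irrefl, if_false,
      if_true, Pi.div_apply, Pi.neg_apply, Pi.inv_apply]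
    field_simp [hd i, hd j]
    ring

theorem norm_lowerSemiseparable_apply_le [NormedField K] {d u v a : ι → K} {C ρ σ : ℝ}
    (hd : ∀ i, ‖d i‖ ≤ C) (hu : ∀ i, ‖u i‖ ≤ ρ) (hv : ∀ i, ‖v i‖ ≤ σ) (ha : ∀ μ, ‖a μ‖ ≤ 1)
    (i j : ι) :
    ‖lowerSemiseparable d u v a i j‖ ≤ if i < j then 0 else if i = j then C else ρ * σ := by
  simp only [lowerSemiseparable, of_apply]
  split_ifs
  · simp
  · exact hd i
  · rw [norm_mul, norm_mul, norm_prod]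
    have hprod : ∏ μ ∈ Ioo j i, ‖a μ‖ ≤ 1 := prod_le_one (fun _ _ => norm_nonneg _) fun μ _ => ha μ
    have huv : ‖u i‖ * ‖v j‖ ≤ ρ * σ :=
      mul_le_mul (hu i) (hv j) (norm_nonneg _) ((norm_nonneg _).trans (hu i))
    simpa using mul_le_mul huv hprod (prod_nonneg fun _ _ => norm_nonneg _)
      ((mul_nonneg (norm_nonneg _) (norm_nonneg _)).trans huv)

noncomputable def defect (w : ℂ) : ℝ := √(1 - ‖w‖ ^ 2)

theorem defect_mul_defect {w : ℂ} (hw : ‖w‖ ≤ 1) :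
    (defect w : ℂ) * defect w = 1 - conj w * w := by
  have h0 : 0 ≤ 1 - ‖w‖ ^ 2 := by nlinarith [norm_nonneg w]
  rw [defect, ← Complex.ofReal_mul, Real.mul_self_sqrt h0, Complex.conj_mul']
  push_cast
  rfl

noncomputable def modelMatrix (l : ι → ℂ) : Matrix ι ι ℂ :=
  lowerSemiseparable l (fun i => defect (l i)) (fun i => defect (l i)) fun μ => -conj (l μ)

noncomputable def resolventMatrix (l : ι → ℂ) (ζ : ℂ) : Matrix ι ι ℂ :=
  lowerSemiseparable (fun i => (ζ - l i)⁻¹) (fun i => defect (l i) / (ζ - l i))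
    (fun i => defect (l i) / (ζ - l i)) fun μ => (1 - conj (l μ) * ζ) / (ζ - l μ)

theorem smul_one_sub_modelMatrix_mul_resolventMatrix [Fintype ι] {l : ι → ℂ} {ζ : ℂ}
    (hl : ∀ i, ‖l i‖ ≤ 1) (hζ : ∀ i, ζ - l i ≠ 0) :
    (ζ • 1 - modelMatrix l) * resolventMatrix l ζ = 1 := by
  rw [modelMatrix, smul_one_sub_lowerSemiseparable]
  convert lowerSemiseparable_mul_lowerSemiseparable_eq_one
    (c := fun μ => (1 - conj (l μ) * ζ) / (ζ - l μ)) hζ fun k => ?_ using 2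
  · ext i j
    simp [resolventMatrix, lowerSemiseparable]
  · have hc : (ζ - l k) * ((1 - conj (l k) * ζ) / (ζ - l k)) = 1 - conj (l k) * ζ :=
      mul_div_cancel₀ _ (hζ k)
    rw [Pi.neg_apply, neg_mul, neg_neg, defect_mul_defect (hl k), sub_neg_eq_add, mul_add, hc]
    ring

theorem norm_resolventMatrix_apply_le {l : ι → ℂ} {ζ : ℂ} {r : ℝ} (hr : r < 1)
    (hl : ∀ i, ‖l i‖ ≤ r) (hζ : 1 ≤ ‖ζ‖) (i j : ι) :
    ‖resolventMatrix l ζ i j‖ ≤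
      if i < j then 0 else if i = j then 1 / (1 - r) else (1 + r) / (1 - r) := by
  have hr1 : 0 < 1 - r := by linarith
  have hd (k : ι) : 1 - ‖l k‖ ≤ ‖ζ - l k‖ := by linarith [norm_sub_norm_le ζ (l k)]
  have hdiag (k : ι) : ‖(ζ - l k)⁻¹‖ ≤ 1 / (1 - r) := by
    rw [norm_inv, one_div]
    exact inv_anti₀ hr1 ((sub_le_sub_left (hl k) 1).trans (hd k))
  have hdefect (k : ι) : ‖(defect (l k) : ℂ) / (ζ - l k)‖ ≤ √((1 + r) / (1 - r)) := by
    rw [norm_div, Complex.norm_real, defect, Real.norm_of_nonneg (Real.sqrt_nonneg _)]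
    exact Real.sqrt_one_sub_sq_div_le (norm_nonneg _) (hl k) hr (hd k)
  have hblaschke (μ : ι) : ‖(1 - conj (l μ) * ζ) / (ζ - l μ)‖ ≤ 1 := by
    rw [norm_div]
    exact div_le_one_of_le₀
      (Complex.norm_one_sub_conj_mul_le_norm_sub ((hl μ).trans hr.le) hζ) (norm_nonneg _)
  refine (norm_lowerSemiseparable_apply_le hdiag hdefect hdefect hblaschke i j).trans_eq ?_
  rw [Real.mul_self_sqrt (div_nonneg (by linarith [norm_nonneg (l i), hl i]) hr1.le)]

end LowerSemiseparable

theorem matNorm_le_mul_of_norm_apply_le {n : ℕ} {T : Matrix (Fin n) (Fin n) ℂ}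
    {X : Matrix (Fin n) (Fin n) ℝ} {c : ℝ} (hc : 0 ≤ c) (h : ∀ i j, ‖T i j‖ ≤ c * X i j) :
    matNorm T ≤ c * matNorm (X.map (↑)) := by
  refine (norm_toEuclideanCLM_le_of_norm_apply_le (S := c • X) h).trans_eq ?_
  have hmap : (c • X).map (↑) = (c : ℂ) • X.map ((↑) : ℝ → ℂ) := by ext; simp
  rw [matNorm, RCLike.ofReal_eq_complex_ofReal, hmap, map_smul, norm_smul,
    Complex.norm_real, Real.norm_of_nonneg hc]

theorem stmt14 (n : ℕ) (r : ℝ) (hr : r ∈ Set.Ioo (0 : ℝ) 1)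
    (l : Fin n → ℂ) (hl : ∀ i, ‖l i‖ ≤ r)
    (M : Matrix (Fin n) (Fin n) ℂ)
    (hM : ∀ i j : Fin n, M i j =
      if (i : ℕ) < (j : ℕ) then 0
      else if (i : ℕ) = (j : ℕ) then l i
      else ((Real.sqrt (1 - ‖l i‖ ^ 2) : ℂ) *
          (Real.sqrt (1 - ‖l j‖ ^ 2) : ℂ)) *
        ∏ μ ∈ Finset.Ioo j i, (-(starRingEnd ℂ) (l μ)))
    (ζ : ℂ) (hζ : 1 ≤ ‖ζ‖) :
    IsUnit (ζ • (1 : Matrix (Fin n) (Fin n) ℂ) - M) ∧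
      (∀ i j : Fin n,
        ‖((ζ • (1 : Matrix (Fin n) (Fin n) ℂ) - M)⁻¹) i j‖ ≤
          (1 / (1 - r)) *
            (if (i : ℕ) < (j : ℕ) then 0 else if (i : ℕ) = (j : ℕ) then 1 else 1 + r)) ∧
      matNorm (ζ • (1 : Matrix (Fin n) (Fin n) ℂ) - M)⁻¹ ≤
        (1 / (1 - r)) * matNorm (Xmat n (1 + r)) := by
  obtain ⟨-, hr1⟩ := hr
  have hM' : M = modelMatrix l := by
    ext i j
    simp [hM, modelMatrix, lowerSemiseparable, defect, Fin.val_inj]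
  have hζl (i : Fin n) : ζ - l i ≠ 0 := fun h => by
    linarith [hl i, congrArg norm (sub_eq_zero.1 h)]
  have hAB := smul_one_sub_modelMatrix_mul_resolventMatrix (fun i => (hl i).trans hr1.le) hζl
  have hinv : (ζ • 1 - M)⁻¹ = resolventMatrix l ζ := hM' ▸ inv_eq_right_inv hAB
  set X : Matrix (Fin n) (Fin n) ℝ :=
    of fun i j => if (i : ℕ) < (j : ℕ) then 0 else if (i : ℕ) = (j : ℕ) then 1 else 1 + r
  have hX : Xmat n (1 + r) = X.map (↑) := by
    ext i j
    simp only [Xmat, X, Matrix.map_apply, Matrix.of_apply]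
    split_ifs <;> simp
  have hentry (i j : Fin n) : ‖resolventMatrix l ζ i j‖ ≤ 1 / (1 - r) * X i j := by
    refine (norm_resolventMatrix_apply_le hr1 hl hζ i j).trans_eq ?_
    simp only [X, Matrix.of_apply, Fin.val_fin_lt, Fin.val_inj]
    split_ifs <;> ring
  refine ⟨hM' ▸ IsUnit.of_mul_eq_one _ hAB, fun i j => hinv ▸ hentry i j, ?_⟩
  rw [hinv, hX]
  exact matNorm_le_mul_of_norm_apply_le (one_div_pos.2 (sub_pos.2 hr1)).le hentry
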